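/- arXiv:2008.04389 — 2 statements merged into one kernel-verified Lean document; each statement's English description precedes it below -/
import Mathlib

section
/- For every t > 0, (1 − Φ(t))/φ(t) ≥ 2/(√(t^2 + 4) + t), where Φ and φ are respectively the cumulative distribution function and the probability density function of the standard normal distribution. -/
open MeasureTheory Real

/-- `φ`, the standard normal density. -/
noncomputable def stdNormalPDF (s : ℝ) : ℝ := (2 * π) ^ (-(1 : ℝ) / 2) * Real.exp (-s ^ 2 / 2)

/-- `Φ(t) = ∫_{-∞}^t φ(s) ds`, the standard normal cumulative distribution function. -/
noncomputable def stdNormalCDF (t : ℝ) : ℝ := ∫ s in Set.Iic t, stdNormalPDF s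

/-!
With `g s = (√(s² + 4) - s) / 2 = 2 / (√(s² + 4) + s)`, the root of `g² + s g = 1`, the function
`G = -φ g` satisfies `G' = φ g (s + 1 / √(s² + 4)) ≤ φ` and `G → 0` at `+∞`. Integrating `G' ≤ φ`
over `(t, ∞)` gives `φ(t) g(t) ≤ 1 - Φ(t)`.
-/

open Filter Topology Set ProbabilityTheory

theorem sub_le_integral_Ioi_of_hasDerivAt_of_le {g g' f : ℝ → ℝ} {a l : ℝ}
    (hderiv : ∀ x ∈ Ici a, HasDerivAt g (g' x) x) (hle : ∀ x ∈ Ioi a, g' x ≤ f x)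
    (hf : IntegrableOn f (Ioi a)) (hg : Tendsto g atTop (𝓝 l)) :
    l - g a ≤ ∫ x in Ioi a, f x := by
  refine le_of_tendsto_of_tendsto (hg.sub_const (g a))
    (intervalIntegral_tendsto_integral_Ioi a hf tendsto_id) ?_
  filter_upwards [eventually_ge_atTop a] with b hab
  refine intervalIntegral.sub_le_integral_of_hasDeriv_right_of_le hab
    (fun x hx => (hderiv x hx.1).continuousAt.continuousWithinAt)
    (fun x hx => (hderiv x hx.1.le).hasDerivWithinAt)
    ((integrableOn_Icc_iff_integrableOn_Ioc).2 (hf.mono_set Ioc_subset_Ioi_self))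
    (fun x hx => hle x hx.1)

theorem stdNormalPDF_eq_gaussianPDFReal : stdNormalPDF = gaussianPDFReal 0 1 := by
  ext s
  simp only [stdNormalPDF, gaussianPDFReal, NNReal.coe_one, mul_one, sub_zero, sqrt_eq_rpow,
    ← rpow_neg two_pi_pos.le, neg_div]

theorem stdNormalPDF_pos (s : ℝ) : 0 < stdNormalPDF s :=
  stdNormalPDF_eq_gaussianPDFReal ▸ gaussianPDFReal_pos 0 1 s one_ne_zero

theorem integrable_stdNormalPDF : Integrable stdNormalPDF :=
  stdNormalPDF_eq_gaussianPDFReal ▸ integrable_gaussianPDFReal 0 1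

theorem hasDerivAt_stdNormalPDF (s : ℝ) : HasDerivAt stdNormalPDF (-s * stdNormalPDF s) s := by
  have hexp : HasDerivAt (fun x : ℝ => -x ^ 2 / 2) (-s) s :=
    ((hasDerivAt_pow 2 s).neg.div_const 2).congr_deriv (by push_cast; ring)
  exact (hexp.exp.const_mul _).congr_deriv (by simp only [stdNormalPDF]; ring)

theorem tendsto_stdNormalPDF_atTop : Tendsto stdNormalPDF atTop (𝓝 0) := by
  have : Tendsto (fun s : ℝ => -s ^ 2 / 2) atTop atBot :=
    (tendsto_neg_atTop_atBot.comp (tendsto_pow_atTop two_ne_zero)).atBot_div_const two_pos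
  unfold stdNormalPDF
  simpa using (tendsto_exp_atBot.comp this).const_mul ((2 * π) ^ (-(1 : ℝ) / 2))

theorem one_sub_stdNormalCDF (t : ℝ) : 1 - stdNormalCDF t = ∫ s in Ioi t, stdNormalPDF s := by
  rw [← integral_gaussianPDFReal_eq_one 0 one_ne_zero, ← stdNormalPDF_eq_gaussianPDFReal,
    ← intervalIntegral.integral_Iic_add_Ioi integrable_stdNormalPDF.integrableOn
      integrable_stdNormalPDF.integrableOn, stdNormalCDF]
  ring

noncomputable def birnbaumBound (s : ℝ) : ℝ := (√(s ^ 2 + 4) - s) / 2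

section birnbaumBound

variable (s : ℝ)

theorem sq_sqrt_sq_add_four : √(s ^ 2 + 4) ^ 2 = s ^ 2 + 4 := sq_sqrt (by positivity)

theorem lt_sqrt_sq_add_four : |s| < √(s ^ 2 + 4) := by
  rw [← sqrt_sq_eq_abs]
  exact sqrt_lt_sqrt (sq_nonneg s) (by linarith)

theorem birnbaumBound_eq_div : birnbaumBound s = 2 / (√(s ^ 2 + 4) + s) := by
  have hpos : 0 < √(s ^ 2 + 4) + s := by linarith [neg_abs_le s, lt_sqrt_sq_add_four s]
  rw [birnbaumBound, eq_div_iff hpos.ne']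
  linear_combination sq_sqrt_sq_add_four s / 2

theorem hasDerivAt_birnbaumBound :
    HasDerivAt birnbaumBound (-(birnbaumBound s / √(s ^ 2 + 4))) s := by
  have hsq : HasDerivAt (fun x : ℝ => x ^ 2 + 4) (2 * s) s :=
    ((hasDerivAt_pow 2 s).add_const 4).congr_deriv (by push_cast; ring)
  refine ((hsq.sqrt (by positivity)).sub (hasDerivAt_id s)).div_const 2 |>.congr_deriv ?_
  rw [birnbaumBound]
  field_simp
  ring

theorem tendsto_birnbaumBound_atTop : Tendsto birnbaumBound atTop (𝓝 0) := by
  have h : Tendsto (fun s : ℝ => √(s ^ 2 + 4) + s) atTop atTop :=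
    tendsto_atTop_mono (fun s => le_add_of_nonneg_left (sqrt_nonneg _)) tendsto_id
  simpa [funext birnbaumBound_eq_div] using h.const_div_atTop 2

/-- Since `g (s + g) = 1`, this reduces to `1 ≤ g √(s² + 4)`, i.e. `s √(s² + 4) ≤ s² + 2`. -/
theorem birnbaumBound_mul_add_inv_sqrt_le_one :
    birnbaumBound s * (s + (√(s ^ 2 + 4))⁻¹) ≤ 1 := by
  have hr := sq_sqrt_sq_add_four s
  have hrs := lt_sqrt_sq_add_four s
  have hpos : 0 < birnbaumBound s := by
    rw [birnbaumBound]; linarith [le_abs_self s]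
  have hroot : birnbaumBound s * (s + birnbaumBound s) = 1 := by
    rw [birnbaumBound]; linear_combination hr / 4
  have hinv : (√(s ^ 2 + 4))⁻¹ ≤ birnbaumBound s := by
    rw [inv_le_iff_one_le_mul₀ ((abs_nonneg s).trans_lt hrs), birnbaumBound]
    nlinarith [sq_nonneg (s * √(s ^ 2 + 4) - s ^ 2 - 2), le_abs_self s]
  calc birnbaumBound s * (s + (√(s ^ 2 + 4))⁻¹) ≤ birnbaumBound s * (s + birnbaumBound s) := by
        gcongr
    _ = 1 := hroot

end birnbaumBound

theorem hasDerivAt_stdNormalPDF_mul_birnbaumBound (s : ℝ) :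
    HasDerivAt (fun x => stdNormalPDF x * birnbaumBound x)
      (-(stdNormalPDF s * (birnbaumBound s * (s + (√(s ^ 2 + 4))⁻¹)))) s :=
  ((hasDerivAt_stdNormalPDF s).mul (hasDerivAt_birnbaumBound s)).congr_deriv (by ring)

theorem statement10_general (t : ℝ) :
    2 / (Real.sqrt (t ^ 2 + 4) + t) ≤ (1 - stdNormalCDF t) / stdNormalPDF t := by
  have hlim : Tendsto (fun x => -(stdNormalPDF x * birnbaumBound x)) atTop (𝓝 0) := by
    simpa using (tendsto_stdNormalPDF_atTop.mul tendsto_birnbaumBound_atTop).neg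
  have h := sub_le_integral_Ioi_of_hasDerivAt_of_le (a := t)
    (fun s _ => (hasDerivAt_stdNormalPDF_mul_birnbaumBound s).neg)
    (fun s _ => by
      simpa using mul_le_of_le_one_right (stdNormalPDF_pos s).le
        (birnbaumBound_mul_add_inv_sqrt_le_one s))
    integrable_stdNormalPDF.integrableOn hlim
  rw [← birnbaumBound_eq_div, le_div_iff₀ (stdNormalPDF_pos t), one_sub_stdNormalCDF]
  simpa [mul_comm] using h

/-- **Lemma 4** (Birnbaum (1942)): for every `t > 0`,
`(1 − Φ(t))/φ(t) ≥ 2/(√(t² + 4) + t)`. -/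
theorem statement10 (t : ℝ) (ht : 0 < t) :
    2 / (Real.sqrt (t ^ 2 + 4) + t) ≤ (1 - stdNormalCDF t) / stdNormalPDF t :=
  statement10_general t
end

section
/- Let n and n_1 be even positive integers with 0 < n_1 < n. Then ((n − n_1)/2) · C(n, (n − n_1)/2) · 2^{-n} ≤ e (2π)^{-1} · ((n − n_1)/√n) · (1 − n_1/n)^{-(n − n_1 + 1)/2} (1 + n_1/n)^{-(n + n_1 + 1)/2}, and furthermore ((n − n_1 + 1)/2) log(1 − n_1/n) + ((n + n_1 + 1)/2) log(1 + n_1/n) ≥ n_1^2/(2n) + n_1^4/(14 n^3) + (1/2) log(1 − n_1^2/n^2), so that ((n − n_1)/2) · C(n, (n − n_1)/2) · 2^{-n} ≤ e (2π)^{-1} (1 − n_1^2/n^2)^{-1/2} · ((n − n_1)/√n) · exp(−n_1^2/(2n) − n_1^4/(14 n^3)). -/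
open Real


lemma fact_lower (m : ℕ) (hm : 1 ≤ m) :
    Real.sqrt π * (Real.sqrt (2 * m) * ((m : ℝ) / Real.exp 1) ^ m) ≤ (m.factorial : ℝ) := by
  have h : Real.sqrt π ≤ Stirling.stirlingSeq m := by
    obtain ⟨j, rfl⟩ := Nat.exists_eq_succ_of_ne_zero (Nat.one_le_iff_ne_zero.mp hm)
    have h := Stirling.stirlingSeq'_antitone.le_of_tendsto
      (Stirling.tendsto_stirlingSeq_sqrt_pi.comp (Filter.tendsto_add_atTop_nat 1)) j
    simpa [Function.comp] using h
  have hden : 0 < Real.sqrt (2 * m) * ((m : ℝ) / Real.exp 1) ^ m := by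
    have : (0:ℝ) < m := by exact_mod_cast hm
    positivity
  have h2 := mul_le_mul_of_nonneg_right h hden.le
  rwa [Stirling.stirlingSeq, div_mul_cancel₀ _ hden.ne'] at h2

lemma fact_upper (m : ℕ) (hm : 1 ≤ m) :
    (m.factorial : ℝ) ≤ Real.exp 1 * Real.sqrt m * ((m : ℝ) / Real.exp 1) ^ m := by
  have h : Stirling.stirlingSeq m ≤ Stirling.stirlingSeq 1 := by
    obtain ⟨j, rfl⟩ := Nat.exists_eq_succ_of_ne_zero (Nat.one_le_iff_ne_zero.mp hm)
    have h := Stirling.stirlingSeq'_antitone (Nat.zero_le j)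
    simpa [Function.comp] using h
  rw [Stirling.stirlingSeq_one] at h
  have hden : 0 < Real.sqrt (2 * m) * ((m : ℝ) / Real.exp 1) ^ m := by
    have : (0:ℝ) < m := by exact_mod_cast hm
    positivity
  have h2 := mul_le_mul_of_nonneg_right h hden.le
  rw [Stirling.stirlingSeq, div_mul_cancel₀ _ hden.ne'] at h2
  refine h2.trans_eq ?_
  have hs2 : Real.sqrt (2 * m) = Real.sqrt 2 * Real.sqrt m := by
    rw [show (2:ℝ) * m = 2 * (m:ℝ) by norm_num, Real.sqrt_mul (by norm_num)]
  have h2ne : Real.sqrt 2 ≠ 0 := by positivity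
  rw [hs2]; field_simp



lemma choose_bound (n k m : ℕ) (hk : 1 ≤ k) (hm : 1 ≤ m) (hkm : k + m = n) :
    (n.choose k : ℝ) ≤ Real.exp 1 * (2 * π)⁻¹ * Real.sqrt n * (n : ℝ) ^ n
      / (Real.sqrt ((k : ℝ) * m) * (k : ℝ) ^ k * (m : ℝ) ^ m) := by
  have hkn : k ≤ n := by omega
  have hfact : (n.choose k : ℝ) * (k.factorial : ℝ) * (m.factorial : ℝ) = (n.factorial : ℝ) := by
    have := Nat.choose_mul_factorial_mul_factorial hkn
    have hm' : n - k = m := by omega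
    rw [hm'] at this
    exact_mod_cast congrArg (Nat.cast : ℕ → ℝ) this
  have hkpos : (0:ℝ) < k := by exact_mod_cast hk
  have hmpos : (0:ℝ) < m := by exact_mod_cast hm
  have hnpos : (0:ℝ) < n := by exact_mod_cast Nat.pos_of_ne_zero (by omega)
  have hklo := fact_lower k hk
  have hmlo := fact_lower m hm
  have hnup := fact_upper n (by omega)
  have hkf : (0:ℝ) < (k.factorial : ℝ) := by exact_mod_cast k.factorial_pos
  have hmf : (0:ℝ) < (m.factorial : ℝ) := by exact_mod_cast m.factorial_pos
  -- choose = n!/(k! m!)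
  have hch : (n.choose k : ℝ) = (n.factorial : ℝ) / ((k.factorial : ℝ) * (m.factorial : ℝ)) := by
    rw [eq_div_iff (by positivity), ← hfact]; ring
  rw [hch]
  have hlow : Real.sqrt π * (Real.sqrt (2 * k) * ((k : ℝ) / Real.exp 1) ^ k)
      * (Real.sqrt π * (Real.sqrt (2 * m) * ((m : ℝ) / Real.exp 1) ^ m))
      ≤ (k.factorial : ℝ) * (m.factorial : ℝ) := by
    apply mul_le_mul hklo hmlo (by positivity) hkf.le
  have hlowpos : (0:ℝ) < Real.sqrt π * (Real.sqrt (2 * k) * ((k : ℝ) / Real.exp 1) ^ k)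
      * (Real.sqrt π * (Real.sqrt (2 * m) * ((m : ℝ) / Real.exp 1) ^ m)) := by positivity
  calc (n.factorial : ℝ) / ((k.factorial : ℝ) * (m.factorial : ℝ))
      ≤ (Real.exp 1 * Real.sqrt n * ((n : ℝ) / Real.exp 1) ^ n)
        / (Real.sqrt π * (Real.sqrt (2 * k) * ((k : ℝ) / Real.exp 1) ^ k)
      * (Real.sqrt π * (Real.sqrt (2 * m) * ((m : ℝ) / Real.exp 1) ^ m))) := by
        apply div_le_div₀ (by positivity) hnup hlowpos hlow
    _ = Real.exp 1 * (2 * π)⁻¹ * Real.sqrt n * (n : ℝ) ^ n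
      / (Real.sqrt ((k : ℝ) * m) * (k : ℝ) ^ k * (m : ℝ) ^ m) := by
        have e1 : Real.sqrt π * Real.sqrt π = π := Real.mul_self_sqrt pi_pos.le
        have e2 : Real.sqrt (2 * (k:ℝ)) * Real.sqrt (2 * (m:ℝ))
            = 2 * Real.sqrt ((k:ℝ) * m) := by
          rw [← Real.sqrt_mul (by positivity), show 2*(k:ℝ)*(2*(m:ℝ)) = 4 * ((k:ℝ)*m) by ring,
            show (4:ℝ) = 2^2 by norm_num, Real.sqrt_mul (by positivity), Real.sqrt_sq (by norm_num)]
        have e3 : ((n:ℝ) / Real.exp 1) ^ n = (n:ℝ)^n / (Real.exp 1)^n := div_pow _ _ _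
        have e4 : (Real.exp 1)^k * (Real.exp 1)^m = (Real.exp 1)^n := by
          rw [← pow_add, hkm]
        have hexp : (0:ℝ) < Real.exp 1 := Real.exp_pos 1
        have hsq : (0:ℝ) < Real.sqrt ((k:ℝ)*m) := by positivity
        have hpi : (0:ℝ) < π := pi_pos
        field_simp [div_pow]
        ring_nf
        have e2' : Real.sqrt ((k:ℝ) * 2) * Real.sqrt ((m:ℝ) * 2) = 2 * Real.sqrt ((k:ℝ) * m) := by
          rw [mul_comm (k:ℝ), mul_comm (m:ℝ)]; exact e2
        have hpi2 : Real.sqrt π ^ 2 = π := Real.sq_sqrt pi_pos.le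
        have e6 : (Real.exp 1)⁻¹ ^ k * (Real.exp 1)⁻¹ ^ m = (Real.exp 1)⁻¹ ^ n := by
          rw [← pow_add, hkm]
        linear_combination (-((n:ℝ)^n * (k:ℝ)^k * (m:ℝ)^m * π * Real.sqrt ((k:ℝ) * 2)
          * Real.sqrt ((m:ℝ) * 2))) * e6
          + (-((n:ℝ)^n * (k:ℝ)^k * (m:ℝ)^m * π * (Real.exp 1)⁻¹ ^ n)) * e2'
          + (-((n:ℝ)^n * (Real.exp 1)⁻¹ ^ k * (Real.exp 1)⁻¹ ^ m * (k:ℝ)^k * (m:ℝ)^m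
            * Real.sqrt ((k:ℝ) * 2) * Real.sqrt ((m:ℝ) * 2))) * hpi2


/-- derivative helper: F'(t) = log(1+t) - log(1-t) - 2t - 4t³/7 -/
lemma hasDerivAt_G (t : ℝ) (h1 : -1 < t) (h2 : t < 1) :
    HasDerivAt (fun s : ℝ => Real.log (1 + s) - Real.log (1 - s) - 2 * s - 4 * s ^ 3 / 7)
      ((1 + t)⁻¹ + (1 - t)⁻¹ - 2 - 12 * t ^ 2 / 7) t := by
  have hp : (0:ℝ) < 1 + t := by linarith
  have hq : (0:ℝ) < 1 - t := by linarith
  have d1 : HasDerivAt (fun s : ℝ => Real.log (1 + s)) ((1 + t)⁻¹) t := by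
    have := (Real.hasDerivAt_log hp.ne').comp t ((hasDerivAt_id t).const_add 1)
    simpa [Function.comp_def] using this
  have d2 : HasDerivAt (fun s : ℝ => Real.log (1 - s)) (-(1 - t)⁻¹) t := by
    have := (Real.hasDerivAt_log hq.ne').comp t ((hasDerivAt_id t).const_sub 1)
    simpa [Function.comp_def] using this
  have d3 : HasDerivAt (fun s : ℝ => 2 * s) 2 t := by
    simpa using (hasDerivAt_id t).const_mul 2
  have d4 : HasDerivAt (fun s : ℝ => 4 * s ^ 3 / 7) (12 * t ^ 2 / 7) t := by
    have := ((hasDerivAt_pow 3 t).const_mul 4).div_const 7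
    exact this.congr_deriv (by norm_num; ring)
  have := ((d1.sub d2).sub d3).sub d4
  exact this.congr_deriv (by ring)

lemma hasDerivAt_F (t : ℝ) (h1 : -1 < t) (h2 : t < 1) :
    HasDerivAt (fun s : ℝ => (1 + s) * Real.log (1 + s) + (1 - s) * Real.log (1 - s)
        - s ^ 2 - s ^ 4 / 7)
      (Real.log (1 + t) - Real.log (1 - t) - 2 * t - 4 * t ^ 3 / 7) t := by
  have hp : (0:ℝ) < 1 + t := by linarith
  have hq : (0:ℝ) < 1 - t := by linarith
  have l1 : HasDerivAt (fun s : ℝ => Real.log (1 + s)) ((1 + t)⁻¹) t := by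
    have := (Real.hasDerivAt_log hp.ne').comp t ((hasDerivAt_id t).const_add 1)
    simpa [Function.comp_def] using this
  have l2 : HasDerivAt (fun s : ℝ => Real.log (1 - s)) (-(1 - t)⁻¹) t := by
    have := (Real.hasDerivAt_log hq.ne').comp t ((hasDerivAt_id t).const_sub 1)
    simpa [Function.comp_def] using this
  have d1 : HasDerivAt (fun s : ℝ => (1 + s) * Real.log (1 + s))
      (1 * Real.log (1 + t) + (1 + t) * (1 + t)⁻¹) t :=
    ((hasDerivAt_id t).const_add 1).mul l1
  have d2 : HasDerivAt (fun s : ℝ => (1 - s) * Real.log (1 - s))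
      ((-1) * Real.log (1 - t) + (1 - t) * (-(1 - t)⁻¹)) t :=
    ((hasDerivAt_id t).const_sub 1).mul l2
  have d3 : HasDerivAt (fun s : ℝ => s ^ 2) (2 * t) t := by
    simpa using hasDerivAt_pow 2 t
  have d4 : HasDerivAt (fun s : ℝ => s ^ 4 / 7) (4 * t ^ 3 / 7) t := by
    have h := (hasDerivAt_pow 4 t).div_const 7
    norm_num at h
    exact h
  have := ((d1.add d2).sub d3).sub d4
  exact this.congr_deriv (by field_simp; ring)

lemma key_ineq (x : ℝ) (hx0 : 0 ≤ x) (hx1 : x < 1) :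
    x ^ 2 + x ^ 4 / 7 ≤ (1 + x) * Real.log (1 + x) + (1 - x) * Real.log (1 - x) := by
  rcases eq_or_lt_of_le hx0 with rfl | hx0'
  · simp
  set G : ℝ → ℝ := fun s => Real.log (1 + s) - Real.log (1 - s) - 2 * s - 4 * s ^ 3 / 7 with hG
  set F : ℝ → ℝ := fun s => (1 + s) * Real.log (1 + s) + (1 - s) * Real.log (1 - s)
      - s ^ 2 - s ^ 4 / 7 with hF
  have hGmono : MonotoneOn G (Set.Icc 0 x) := by
    apply monotoneOn_of_deriv_nonneg (convex_Icc 0 x)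
    · intro t ht
      exact (hasDerivAt_G t (by linarith [ht.1]) (by linarith [ht.2])).differentiableAt.continuousAt.continuousWithinAt
    · intro t ht
      rw [interior_Icc] at ht
      exact (hasDerivAt_G t (by linarith [ht.1]) (by linarith [ht.2])).differentiableAt.differentiableWithinAt
    · intro t ht
      rw [interior_Icc] at ht
      rw [(hasDerivAt_G t (by linarith [ht.1]) (by linarith [ht.2])).deriv]
      have hp : (0:ℝ) < 1 + t := by linarith [ht.1]
      have hq : (0:ℝ) < 1 - t := by linarith [ht.2]
      have hu : (1 + t)⁻¹ * (1 + t) = 1 := inv_mul_cancel₀ hp.ne'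
      have hv : (1 - t)⁻¹ * (1 - t) = 1 := inv_mul_cancel₀ hq.ne'
      have hupos : 0 < (1 + t)⁻¹ := by positivity
      have hvpos : 0 < (1 - t)⁻¹ := by positivity
      nlinarith [sq_nonneg t, sq_nonneg (t*t), mul_pos hupos hvpos, mul_pos hp hq,
        mul_pos (mul_pos hupos hvpos) (mul_pos hp hq)]
  have hG0 : G 0 = 0 := by simp [hG]
  have hGnonneg : ∀ t ∈ Set.Icc (0:ℝ) x, 0 ≤ G t := by
    intro t ht
    have := hGmono (Set.left_mem_Icc.mpr hx0) ht ht.1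
    rwa [hG0] at this
  have hFmono : MonotoneOn F (Set.Icc 0 x) := by
    apply monotoneOn_of_deriv_nonneg (convex_Icc 0 x)
    · intro t ht
      exact (hasDerivAt_F t (by linarith [ht.1]) (by linarith [ht.2])).differentiableAt.continuousAt.continuousWithinAt
    · intro t ht
      rw [interior_Icc] at ht
      exact (hasDerivAt_F t (by linarith [ht.1]) (by linarith [ht.2])).differentiableAt.differentiableWithinAt
    · intro t ht
      rw [interior_Icc] at ht
      rw [(hasDerivAt_F t (by linarith [ht.1]) (by linarith [ht.2])).deriv]
      exact hGnonneg t ⟨ht.1.le, ht.2.le⟩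
  have := hFmono (Set.left_mem_Icc.mpr hx0) (Set.right_mem_Icc.mpr hx0) hx0
  have hF0 : F 0 = 0 := by simp [hF]
  rw [hF0] at this
  simp only [hF] at this
  linarith

set_option maxHeartbeats 1000000 in
/-- The Stirling-type binomial bounds used in the proof of Theorem 2.3:
for even positive integers `n₁ < n`,
`((n−n₁)/2)·C(n,(n−n₁)/2)·2^{-n}` is bounded by
`e(2π)⁻¹·((n−n₁)/√n)·(1−n₁/n)^{-(n−n₁+1)/2}·(1+n₁/n)^{-(n+n₁+1)/2}`;
the logarithmic lower bound
`((n−n₁+1)/2)log(1−n₁/n) + ((n+n₁+1)/2)log(1+n₁/n) ≥ n₁²/(2n) + n₁⁴/(14n³) + (1/2)log(1−n₁²/n²)`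
holds; and consequently
`((n−n₁)/2)·C(n,(n−n₁)/2)·2^{-n} ≤ e(2π)⁻¹(1−n₁²/n²)^{-1/2}·((n−n₁)/√n)·exp(−n₁²/(2n) − n₁⁴/(14n³))`. -/
theorem statement13 (n n₁ : ℕ) (hn : Even n) (hn₁ : Even n₁) (h0 : 0 < n₁) (h1 : n₁ < n) :
    ((n : ℝ) - n₁) / 2 * (n.choose ((n - n₁) / 2) : ℝ) / 2 ^ n
      ≤ Real.exp 1 * (2 * π)⁻¹ * (((n : ℝ) - n₁) / Real.sqrt n)
          * (1 - (n₁ : ℝ) / n) ^ (-(((n : ℝ) - n₁ + 1) / 2))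
          * (1 + (n₁ : ℝ) / n) ^ (-(((n : ℝ) + n₁ + 1) / 2))
    ∧ (n₁ : ℝ) ^ 2 / (2 * n) + (n₁ : ℝ) ^ 4 / (14 * (n : ℝ) ^ 3)
          + (1 / 2) * Real.log (1 - (n₁ : ℝ) ^ 2 / (n : ℝ) ^ 2)
        ≤ (((n : ℝ) - n₁ + 1) / 2) * Real.log (1 - (n₁ : ℝ) / n)
          + (((n : ℝ) + n₁ + 1) / 2) * Real.log (1 + (n₁ : ℝ) / n)
    ∧ ((n : ℝ) - n₁) / 2 * (n.choose ((n - n₁) / 2) : ℝ) / 2 ^ n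
      ≤ Real.exp 1 * (2 * π)⁻¹ * (1 - (n₁ : ℝ) ^ 2 / (n : ℝ) ^ 2) ^ (-(1 : ℝ) / 2)
          * (((n : ℝ) - n₁) / Real.sqrt n)
          * Real.exp (-(n₁ : ℝ) ^ 2 / (2 * n) - (n₁ : ℝ) ^ 4 / (14 * (n : ℝ) ^ 3)) := by
  -- natural number setup
  set k : ℕ := (n - n₁) / 2 with hkdef
  set m : ℕ := n - k with hmdef
  have hsub_even : Even (n - n₁) := (Nat.even_sub h1.le).mpr (by simp [hn, hn₁])
  have h2k : 2 * k = n - n₁ := by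
    obtain ⟨c, hc⟩ := hsub_even
    omega
  have hk1 : 1 ≤ k := by omega
  have hm1 : 1 ≤ m := by omega
  have hkm : k + m = n := by omega
  -- real casts
  have hN : (0:ℝ) < n := by exact_mod_cast Nat.pos_of_ne_zero (by omega)
  have hA : (0:ℝ) < n₁ := by exact_mod_cast h0
  have hAN : (n₁ : ℝ) < n := by exact_mod_cast h1
  have hK : (k : ℝ) = ((n:ℝ) - n₁) / 2 := by
    have : (2 * k : ℕ) = (n - n₁ : ℕ) := h2k
    have h' : (2:ℝ) * k = (n:ℝ) - n₁ := by
      have := congrArg (Nat.cast : ℕ → ℝ) this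
      push_cast [h1.le] at this
      linarith
    linarith
  have hM : (m : ℝ) = ((n:ℝ) + n₁) / 2 := by
    have : (m : ℝ) = (n:ℝ) - k := by
      have := congrArg (Nat.cast : ℕ → ℝ) hmdef
      push_cast [show k ≤ n by omega] at this
      linarith
    rw [this, hK]; ring
  have hKpos : (0:ℝ) < k := by exact_mod_cast hk1
  have hMpos : (0:ℝ) < m := by exact_mod_cast hm1
  set x : ℝ := (n₁ : ℝ) / n with hxdef
  clear_value x
  have hx0 : 0 < x := by rw [hxdef]; positivity
  have hx1 : x < 1 := by rw [hxdef]; exact (div_lt_one hN).mpr hAN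
  have h1x : 1 - x = 2 * (k:ℝ) / n := by
    rw [hxdef, hK]; field_simp
  have h2x : 1 + x = 2 * (m:ℝ) / n := by
    rw [hxdef, hM]; field_simp
  have h1xpos : (0:ℝ) < 1 - x := by linarith
  have h2xpos : (0:ℝ) < 1 + x := by linarith
  have hsqrtN : (0:ℝ) < Real.sqrt n := Real.sqrt_pos.mpr hN
  -- exponents
  have ha : ((n:ℝ) - n₁ + 1) / 2 = (k:ℝ) + 1/2 := by rw [hK]; ring
  have hb : ((n:ℝ) + n₁ + 1) / 2 = (m:ℝ) + 1/2 := by rw [hM]; ring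
  -- rpow expansions
  have ea : (1 - x) ^ (-(((n:ℝ) - n₁ + 1) / 2)) = ((1-x)^k * Real.sqrt (1-x))⁻¹ := by
    rw [ha, Real.rpow_neg h1xpos.le, Real.rpow_add h1xpos, Real.rpow_natCast,
      ← Real.sqrt_eq_rpow]
  have eb : (1 + x) ^ (-(((n:ℝ) + n₁ + 1) / 2)) = ((1+x)^m * Real.sqrt (1+x))⁻¹ := by
    rw [hb, Real.rpow_neg h2xpos.le, Real.rpow_add h2xpos, Real.rpow_natCast,
      ← Real.sqrt_eq_rpow]
  -- sqrt algebra
  have s1 : Real.sqrt (1 - x) = Real.sqrt (2 * (k:ℝ)) / Real.sqrt n := by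
    rw [h1x, Real.sqrt_div (by positivity)]
  have s2 : Real.sqrt (1 + x) = Real.sqrt (2 * (m:ℝ)) / Real.sqrt n := by
    rw [h2x, Real.sqrt_div (by positivity)]
  have e2 : Real.sqrt (2 * (k:ℝ)) * Real.sqrt (2 * (m:ℝ)) = 2 * Real.sqrt ((k:ℝ) * m) := by
    rw [← Real.sqrt_mul (by positivity), show 2*(k:ℝ)*(2*(m:ℝ)) = 2^2 * ((k:ℝ)*m) by ring,
      Real.sqrt_mul (by positivity), Real.sqrt_sq (by norm_num)]
  have p1 : (1 - x)^k = 2^k * (k:ℝ)^k / (n:ℝ)^k := by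
    rw [h1x, div_pow, mul_pow]
  have p2 : (1 + x)^m = 2^m * (m:ℝ)^m / (n:ℝ)^m := by
    rw [h2x, div_pow, mul_pow]
  have pwN : (n:ℝ)^k * (n:ℝ)^m = (n:ℝ)^n := by rw [← pow_add, hkm]
  have pw2 : (2:ℝ)^k * (2:ℝ)^m = (2:ℝ)^n := by rw [← pow_add, hkm]
  have qN : Real.sqrt n * Real.sqrt n = (n:ℝ) := Real.mul_self_sqrt hN.le
  have hKM : (0:ℝ) < Real.sqrt ((k:ℝ) * m) := by positivity
  have hepos : (0:ℝ) < Real.exp 1 := Real.exp_pos 1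
  have hpi : (0:ℝ) < π := pi_pos
  -- the key identity for part 1
  have key1 : Real.exp 1 * (2 * π)⁻¹ * (((n : ℝ) - n₁) / Real.sqrt n)
          * (1 - x) ^ (-(((n : ℝ) - n₁ + 1) / 2))
          * (1 + x) ^ (-(((n : ℝ) + n₁ + 1) / 2))
      = (k:ℝ) * (Real.exp 1 * (2 * π)⁻¹ * Real.sqrt n * (n : ℝ) ^ n
          / (Real.sqrt ((k : ℝ) * m) * (k : ℝ) ^ k * (m : ℝ) ^ m)) / 2 ^ n := by
    rw [ea, eb, s1, s2, p1, p2, show ((n:ℝ) - n₁) = 2 * (k:ℝ) by rw [hK]; ring]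
    rw [mul_inv, mul_inv]
    have q2 : Real.sqrt 2 * Real.sqrt 2 = 2 := Real.mul_self_sqrt (by norm_num)
    field_simp
    rw [← pwN, ← pw2]
    linear_combination (-((n:ℝ)^k * (n:ℝ)^m * 2^k * 2^m)) * e2
  -- Part 1
  have part1 : ((n : ℝ) - n₁) / 2 * (n.choose k : ℝ) / 2 ^ n
      ≤ Real.exp 1 * (2 * π)⁻¹ * (((n : ℝ) - n₁) / Real.sqrt n)
          * (1 - x) ^ (-(((n : ℝ) - n₁ + 1) / 2))
          * (1 + x) ^ (-(((n : ℝ) + n₁ + 1) / 2)) := by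
    rw [key1, ← hK]
    gcongr
    exact choose_bound n k m hk1 hm1 hkm
  -- Part 2
  have hxx : 1 - (n₁:ℝ)^2/(n:ℝ)^2 = (1-x)*(1+x) := by rw [hxdef]; field_simp; ring
  have hy : (0:ℝ) < 1 - (n₁:ℝ)^2/(n:ℝ)^2 := by rw [hxx]; positivity
  have hlog : Real.log (1 - (n₁:ℝ)^2/(n:ℝ)^2) = Real.log (1-x) + Real.log (1+x) := by
    rw [hxx, Real.log_mul h1xpos.ne' h2xpos.ne']
  have part2 : (n₁ : ℝ) ^ 2 / (2 * n) + (n₁ : ℝ) ^ 4 / (14 * (n : ℝ) ^ 3)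
          + (1 / 2) * Real.log (1 - (n₁ : ℝ) ^ 2 / (n : ℝ) ^ 2)
        ≤ (((n : ℝ) - n₁ + 1) / 2) * Real.log (1 - x)
          + (((n : ℝ) + n₁ + 1) / 2) * Real.log (1 + x) := by
    have hkey := key_ineq x hx0.le hx1
    have e_a : ((n:ℝ) - n₁ + 1)/2 = (n:ℝ)/2*(1-x) + 1/2 := by rw [hxdef]; field_simp
    have e_b : ((n:ℝ) + n₁ + 1)/2 = (n:ℝ)/2*(1+x) + 1/2 := by rw [hxdef]; field_simp
    have hx2 : x^2 = (n₁:ℝ)^2/(n:ℝ)^2 := by rw [hxdef, div_pow]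
    have hx4 : x^4 = (n₁:ℝ)^4/(n:ℝ)^4 := by rw [hxdef, div_pow]
    have q1 : (n₁:ℝ)^2/(2*n) = (n:ℝ)/2 * x^2 := by rw [hx2]; field_simp
    have q2 : (n₁:ℝ)^4/(14*(n:ℝ)^3) = (n:ℝ)/2 * (x^4/7) := by rw [hx4]; field_simp; ring
    rw [hlog, e_a, e_b, q1, q2]
    have hmul := mul_le_mul_of_nonneg_left hkey (by positivity : (0:ℝ) ≤ (n:ℝ)/2)
    have expand : ((n:ℝ)/2*(1-x)+1/2)*Real.log (1-x) + ((n:ℝ)/2*(1+x)+1/2)*Real.log (1+x)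
        = (n:ℝ)/2*((1+x)*Real.log (1+x)+(1-x)*Real.log (1-x))
          + 1/2*(Real.log (1-x)+Real.log (1+x)) := by ring
    rw [expand]
    linarith [hmul]
  -- Part 3
  refine ⟨part1, part2, part1.trans ?_⟩
  have er1 : (1 - x) ^ (-(((n:ℝ) - n₁ + 1) / 2)) * (1 + x) ^ (-(((n:ℝ) + n₁ + 1) / 2))
      = Real.exp (-((((n:ℝ) - n₁ + 1) / 2) * Real.log (1-x)
          + (((n:ℝ) + n₁ + 1) / 2) * Real.log (1+x))) := by
    rw [Real.rpow_def_of_pos h1xpos, Real.rpow_def_of_pos h2xpos, ← Real.exp_add]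
    congr 1
    ring
  have er2 : (1 - (n₁:ℝ)^2/(n:ℝ)^2) ^ (-(1:ℝ)/2)
      = Real.exp (-(1/2) * Real.log (1 - (n₁:ℝ)^2/(n:ℝ)^2)) := by
    rw [Real.rpow_def_of_pos hy]
    congr 1
    ring
  have hcoef : (0:ℝ) ≤ Real.exp 1 * (2 * π)⁻¹ * (((n : ℝ) - n₁) / Real.sqrt n) := by
    have : (0:ℝ) < (n:ℝ) - n₁ := by linarith
    positivity
  calc Real.exp 1 * (2 * π)⁻¹ * (((n : ℝ) - n₁) / Real.sqrt n)
          * (1 - x) ^ (-(((n : ℝ) - n₁ + 1) / 2))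
          * (1 + x) ^ (-(((n : ℝ) + n₁ + 1) / 2))
      = Real.exp 1 * (2 * π)⁻¹ * (((n : ℝ) - n₁) / Real.sqrt n)
          * Real.exp (-((((n:ℝ) - n₁ + 1) / 2) * Real.log (1-x)
            + (((n:ℝ) + n₁ + 1) / 2) * Real.log (1+x))) := by
        rw [mul_assoc, er1]
    _ ≤ Real.exp 1 * (2 * π)⁻¹ * (((n : ℝ) - n₁) / Real.sqrt n)
          * Real.exp (-(1/2) * Real.log (1 - (n₁:ℝ)^2/(n:ℝ)^2)
            + (-(n₁ : ℝ) ^ 2 / (2 * n) - (n₁ : ℝ) ^ 4 / (14 * (n : ℝ) ^ 3))) := by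
        apply mul_le_mul_of_nonneg_left _ hcoef
        apply Real.exp_le_exp.mpr
        refine le_of_le_of_eq (neg_le_neg part2) ?_
        ring
    _ = Real.exp 1 * (2 * π)⁻¹ * (1 - (n₁ : ℝ) ^ 2 / (n : ℝ) ^ 2) ^ (-(1 : ℝ) / 2)
          * (((n : ℝ) - n₁) / Real.sqrt n)
          * Real.exp (-(n₁ : ℝ) ^ 2 / (2 * n) - (n₁ : ℝ) ^ 4 / (14 * (n : ℝ) ^ 3)) := by
        rw [er2, Real.exp_add]
        ring
end
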